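/- arXiv:2305.14954 — 3 statements merged into one kernel-verified Lean document; each statement's English description precedes it below -/
import Mathlib

section
/- Let L > 2, ū₁, ū₂ > 0 and γ ∈ ℝ, and set q_m = 2πm/L for m ∈ ℕ. Then there exists m ≥ 1 such that 1 − |γ|·(|sin(q_m)|/q_m)·√(ū₁·ū₂) < 0 (i.e. the mode q_m has a positive growth rate) if and only if |γ| > 1/((sin(2π/L)/(2π/L))·√(ū₁·ū₂)). Equivalently, the constant steady state of the top-hat system is linearly unstable exactly when γ < γ_c⁻ or γ > γ_c⁺, where γ_c± = ±1/(K̂₁(2π/L)·√(ū₁·ū₂)). -/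
lemma abs_sin_nat_mul_le' (x : ℝ) (hx : 0 ≤ Real.sin x) (n : ℕ) :
    |Real.sin (n * x)| ≤ n * Real.sin x := by
  induction n with
  | zero => simp
  | succ n ih =>
    have : Real.sin ((n + 1 : ℕ) * x) = Real.sin (n * x) * Real.cos x
        + Real.cos (n * x) * Real.sin x := by
      push_cast; rw [add_mul, one_mul, Real.sin_add]
    rw [this]
    calc |Real.sin (n * x) * Real.cos x + Real.cos (n * x) * Real.sin x|
        ≤ |Real.sin (n * x) * Real.cos x| + |Real.cos (n * x) * Real.sin x| :=
          abs_add_le _ _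
      _ ≤ n * Real.sin x + 1 * Real.sin x := by
          gcongr
          · rw [abs_mul]
            calc |Real.sin (n * x)| * |Real.cos x| ≤ |Real.sin (n * x)| * 1 := by
                  gcongr; exact Real.abs_cos_le_one x
              _ = |Real.sin (n * x)| := mul_one _
              _ ≤ n * Real.sin x := ih
          · rw [abs_mul, abs_of_nonneg hx]
            gcongr
            exact Real.abs_cos_le_one _
      _ = (n + 1 : ℕ) * Real.sin x := by push_cast; ring

/-- For the top-hat kernel on a domain of length `L > 2`, some admissible
wavenumber `q_m = 2πm/L` (`m ≥ 1`) has a positive growth rate, i.e.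
`1 - |γ| (|sin q_m|/q_m) √(ū₁ū₂) < 0`, iff
`|γ| > 1/((sin(2π/L)/(2π/L)) √(ū₁ū₂))`; equivalently, iff `γ < γ_c⁻` or
`γ > γ_c⁺` where `γ_c± = ±1/(K̂₁(2π/L) √(ū₁ū₂))`. -/
theorem stmt8 (L ubar₁ ubar₂ γ : ℝ) (hL : 2 < L)
    (hu₁ : 0 < ubar₁) (hu₂ : 0 < ubar₂) :
    let gammac : ℝ :=
      1 / ((Real.sin (2 * Real.pi / L) / (2 * Real.pi / L)) * Real.sqrt (ubar₁ * ubar₂))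
    ((∃ m : ℕ, 1 ≤ m ∧
        1 - |γ| * (|Real.sin (2 * Real.pi * m / L)| / (2 * Real.pi * m / L))
          * Real.sqrt (ubar₁ * ubar₂) < 0)
      ↔ |γ| > gammac) ∧
    ((∃ m : ℕ, 1 ≤ m ∧
        1 - |γ| * (|Real.sin (2 * Real.pi * m / L)| / (2 * Real.pi * m / L))
          * Real.sqrt (ubar₁ * ubar₂) < 0)
      ↔ (γ < -gammac ∨ γ > gammac)) := by
  intro gammac
  have hL0 : (0:ℝ) < L := by linarith
  have hpi := Real.pi_pos
  set q1 : ℝ := 2 * Real.pi / L with hq1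
  have hq1pos : 0 < q1 := by positivity
  have hq1lt : q1 < Real.pi := by
    rw [hq1, div_lt_iff₀ hL0]
    nlinarith
  have hsinq1 : 0 < Real.sin q1 := Real.sin_pos_of_pos_of_lt_pi hq1pos hq1lt
  have hS : 0 < Real.sqrt (ubar₁ * ubar₂) := Real.sqrt_pos.2 (by positivity)
  set S := Real.sqrt (ubar₁ * ubar₂)
  set c : ℝ := Real.sin q1 / q1 * S with hc
  have hcpos : 0 < c := by positivity
  have hgc : gammac = 1 / c := rfl
  -- key inequality: f(q_m) ≤ f(q_1)
  have key : ∀ m : ℕ, 1 ≤ m →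
      |Real.sin (2 * Real.pi * m / L)| / (2 * Real.pi * m / L) ≤ Real.sin q1 / q1 := by
    intro m hm
    have hmpos : (0:ℝ) < m := by exact_mod_cast hm
    have hqm : 2 * Real.pi * m / L = m * q1 := by rw [hq1]; ring
    rw [hqm, div_le_div_iff₀ (by positivity) hq1pos]
    have h1 : |Real.sin (m * q1)| ≤ m * Real.sin q1 :=
      abs_sin_nat_mul_le' q1 hsinq1.le m
    calc |Real.sin (m * q1)| * q1 ≤ m * Real.sin q1 * q1 := by gcongr
      _ = Real.sin q1 * (m * q1) := by ring
  have main : (∃ m : ℕ, 1 ≤ m ∧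
      1 - |γ| * (|Real.sin (2 * Real.pi * m / L)| / (2 * Real.pi * m / L)) * S < 0)
      ↔ |γ| > gammac := by
    constructor
    · rintro ⟨m, hm, hlt⟩
      have h2 : |γ| * (|Real.sin (2 * Real.pi * m / L)| / (2 * Real.pi * m / L)) * S
          ≤ |γ| * c := by
        rw [hc, ← mul_assoc]
        gcongr |γ| * ?_ * S
        exact key m hm
      have : 1 < |γ| * c := by linarith
      rw [hgc, gt_iff_lt, div_lt_iff₀ hcpos]
      linarith
    · intro hγ
      refine ⟨1, le_refl 1, ?_⟩
      have hq : 2 * Real.pi * (1:ℕ) / L = q1 := by push_cast; rw [hq1]; ring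
      rw [hq, abs_of_nonneg hsinq1.le]
      have : 1 / c < |γ| := hγ
      rw [div_lt_iff₀ hcpos] at this
      nlinarith
  refine ⟨main, main.trans ?_⟩
  rw [hgc]
  constructor
  · intro h
    rcases lt_abs.mp h with h' | h'
    · right; exact h'
    · left; linarith
  · rintro (h | h)
    · exact lt_abs.mpr (Or.inr (by linarith))
    · exact lt_abs.mpr (Or.inl h)
end

section
/- Let σ > 0, Λ > 0, ν > 0, η > 0, μ ∈ ℝ, Q ≠ 0 real, and let a₀ ∈ ℝ satisfy a₀² = σ/Λ. Then (1/2)·(−μ·Q² − 2σ + √(μ²·Q⁴ + Q²·(8·a₀²·η·ν − 4·μ·σ) + 4·σ²)) > 0 if and only if Λ·μ < η·ν, i.e. if and only if Γ := (Λ·μ)/(η·ν) − 1 < 0. In particular, if Γ < 0 the growth rate λ̄⁺(Q) is positive for every Q ≠ 0 (the small-amplitude pattern is unstable), while if Γ > 0 then λ̄⁺(Q) ≤ 0 for all Q (the pattern is linearly stable against these perturbations). -/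
lemma key12 (σ Λ ν η μ Q a₀ : ℝ) (hσ : 0 < σ) (hΛ : 0 < Λ) (hν : 0 < ν)
    (hη : 0 < η) (hQ : Q ≠ 0) (ha : a₀ ^ 2 = σ / Λ) :
    (0 < (1 / 2) * (-μ * Q ^ 2 - 2 * σ
      + Real.sqrt (μ ^ 2 * Q ^ 4 + Q ^ 2 * (8 * a₀ ^ 2 * η * ν - 4 * μ * σ)
          + 4 * σ ^ 2)) ↔ Λ * μ < η * ν) := by
  set D : ℝ := μ ^ 2 * Q ^ 4 + Q ^ 2 * (8 * a₀ ^ 2 * η * ν - 4 * μ * σ) + 4 * σ ^ 2 with hD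
  have hQ2 : 0 < Q ^ 2 := by positivity
  have hdiff : D - (μ * Q ^ 2 + 2 * σ) ^ 2 = 8 * σ * Q ^ 2 / Λ * (η * ν - Λ * μ) := by
    rw [hD, ha]; field_simp; ring
  constructor
  · intro hpos
    by_contra hle
    push_neg at hle
    have hμ : 0 < μ := by nlinarith [mul_pos hη hν]
    have hb : 0 < μ * Q ^ 2 + 2 * σ := by positivity
    have hDle : D ≤ (μ * Q ^ 2 + 2 * σ) ^ 2 := by nlinarith [div_pos (by positivity : (0:ℝ) < 8 * σ * Q ^ 2) hΛ, mul_nonneg (le_of_lt (div_pos (by positivity : (0:ℝ) < 8 * σ * Q ^ 2) hΛ)) (by linarith : (0:ℝ) ≤ Λ * μ - η * ν)]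
    have hs : Real.sqrt D ≤ μ * Q ^ 2 + 2 * σ := by
      calc Real.sqrt D ≤ Real.sqrt ((μ * Q ^ 2 + 2 * σ) ^ 2) := Real.sqrt_le_sqrt hDle
        _ = μ * Q ^ 2 + 2 * σ := Real.sqrt_sq hb.le
    nlinarith
  · intro hlt
    rcases le_or_gt 0 (μ * Q ^ 2 + 2 * σ) with hb | hb
    · have hDgt : (μ * Q ^ 2 + 2 * σ) ^ 2 < D := by
        have : 0 < 8 * σ * Q ^ 2 / Λ * (η * ν - Λ * μ) := by
          apply mul_pos (by positivity) (by linarith)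
        linarith
      have hs : μ * Q ^ 2 + 2 * σ < Real.sqrt D := (Real.lt_sqrt hb).mpr hDgt
      nlinarith
    · have hs : 0 ≤ Real.sqrt D := Real.sqrt_nonneg _
      nlinarith

/-- For `σ, Λ, ν, η > 0`, `Q ≠ 0` and `a₀² = σ/Λ`, the growth rate
`λ̄⁺(Q) = (1/2)(−μQ² − 2σ + √(μ²Q⁴ + Q²(8a₀²ην − 4μσ) + 4σ²))` is positive
iff `Λμ < ην`, i.e. iff `Γ = Λμ/(ην) − 1 < 0`. In particular, if `Γ < 0`
then `λ̄⁺(Q') > 0` for every `Q' ≠ 0` (the small-amplitude pattern is unstable),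
while if `Γ > 0` then `λ̄⁺(Q') ≤ 0` for all `Q'`. -/
theorem stmt12 (σ Λ ν η μ Q a₀ : ℝ) (hσ : 0 < σ) (hΛ : 0 < Λ) (hν : 0 < ν)
    (hη : 0 < η) (hQ : Q ≠ 0) (ha : a₀ ^ 2 = σ / Λ) :
    let lamPlus : ℝ → ℝ := fun Q' => (1 / 2) * (-μ * Q' ^ 2 - 2 * σ
      + Real.sqrt (μ ^ 2 * Q' ^ 4 + Q' ^ 2 * (8 * a₀ ^ 2 * η * ν - 4 * μ * σ)
          + 4 * σ ^ 2))
    (0 < lamPlus Q ↔ Λ * μ < η * ν) ∧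
    (0 < lamPlus Q ↔ Λ * μ / (η * ν) - 1 < 0) ∧
    (Λ * μ / (η * ν) - 1 < 0 → ∀ Q' : ℝ, Q' ≠ 0 → 0 < lamPlus Q') ∧
    (0 < Λ * μ / (η * ν) - 1 → ∀ Q' : ℝ, lamPlus Q' ≤ 0) := by
  intro lamPlus
  have hην : 0 < η * ν := mul_pos hη hν
  have hΓ : Λ * μ / (η * ν) - 1 < 0 ↔ Λ * μ < η * ν := by
    rw [sub_neg, div_lt_one hην]
  have hkey : ∀ Q' : ℝ, Q' ≠ 0 → (0 < lamPlus Q' ↔ Λ * μ < η * ν) := fun Q' hQ' =>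
    key12 σ Λ ν η μ Q' a₀ hσ hΛ hν hη hQ' ha
  refine ⟨hkey Q hQ, (hkey Q hQ).trans hΓ.symm, fun h Q' hQ' => (hkey Q' hQ').mpr (hΓ.mp h), ?_⟩
  intro h Q'
  have hge : η * ν ≤ Λ * μ := by
    by_contra hc
    push_neg at hc
    have := hΓ.mpr hc
    linarith
  rcases eq_or_ne Q' 0 with rfl | hQ'
  · show (1 / 2) * (-μ * 0 ^ 2 - 2 * σ + Real.sqrt (μ ^ 2 * 0 ^ 4 + 0 ^ 2 * (8 * a₀ ^ 2 * η * ν - 4 * μ * σ) + 4 * σ ^ 2)) ≤ 0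
    have : Real.sqrt (μ ^ 2 * 0 ^ 4 + 0 ^ 2 * (8 * a₀ ^ 2 * η * ν - 4 * μ * σ) + 4 * σ ^ 2) = 2 * σ := by
      rw [show μ ^ 2 * (0:ℝ) ^ 4 + 0 ^ 2 * (8 * a₀ ^ 2 * η * ν - 4 * μ * σ) + 4 * σ ^ 2 = (2 * σ) ^ 2 by ring]
      exact Real.sqrt_sq (by linarith)
    rw [this]; ring_nf; norm_num
  · by_contra hc
    push_neg at hc
    have := (hkey Q' hQ').mp hc
    linarith
end

section
/- Let ū > 0 and q ≠ 0 be real; set k₁ = sin(q)/q and k₂ = sin(2q)/(2q), and assume k₁ ≠ 0 and k₁² ≠ k₂². Define γ_c = 1/(k₁·ū), ρ₂ = a₂ = −1/(γ_c·ū·k₁), ψ₁ = ψ₂ = (1 − γ_c·ū·k₂)/(2·ū·(1 − γ_c²·ū²·k₂²)), Λ = (1/2)·q²·γ_c·(2·k₂·(ψ₁ + ψ₂) − k₁·(ψ₁·ρ₂ + ψ₂·a₂)), ν = q²/ū, μ = 1 + γ_c·ū, η = 1/ū. Then (Λ·μ)/(η·ν) − 1 = ((1 + k₁)·(2·k₂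 + k₁))/(2·k₁·(k₂ + k₁)) − 1; in particular this quantity is independent of ū and of q except through k₁ and k₂. -/
/-- For the top-hat kernel with equal masses `ū₁ = ū₂ = ū`, the stability
coefficient satisfies
`Λμ/(ην) − 1 = (1 + k₁)(2k₂ + k₁)/(2k₁(k₂ + k₁)) − 1`,
where `k₁ = sin q / q` and `k₂ = sin(2q)/(2q)`; in particular it is
independent of `ū` and depends on `q` only through `k₁` and `k₂`. -/
theorem stmt13 (ubar q : ℝ) (hu : 0 < ubar) (hq : q ≠ 0)
    (k₁ k₂ : ℝ) (hk₁def : k₁ = Real.sin q / q)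
    (hk₂def : k₂ = Real.sin (2 * q) / (2 * q))
    (hk₁ : k₁ ≠ 0) (hkk : k₁ ^ 2 ≠ k₂ ^ 2)
    (γc ρ₂ a₂ ψ₁ ψ₂ Λ ν μ η : ℝ)
    (hγc : γc = 1 / (k₁ * ubar))
    (hρ₂ : ρ₂ = -1 / (γc * ubar * k₁))
    (ha₂ : a₂ = -1 / (γc * ubar * k₁))
    (hψ₁ : ψ₁ = (1 - γc * ubar * k₂) / (2 * ubar * (1 - γc ^ 2 * ubar ^ 2 * k₂ ^ 2)))
    (hψ₂ : ψ₂ = (1 - γc * ubar * k₂) / (2 * ubar * (1 - γc ^ 2 * ubar ^ 2 * k₂ ^ 2)))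
    (hΛ : Λ = (1 / 2) * q ^ 2 * γc
        * (2 * k₂ * (ψ₁ + ψ₂) - k₁ * (ψ₁ * ρ₂ + ψ₂ * a₂)))
    (hν : ν = q ^ 2 / ubar) (hμ : μ = 1 + γc * ubar) (hη : η = 1 / ubar) :
    Λ * μ / (η * ν) - 1
      = (1 + k₁) * (2 * k₂ + k₁) / (2 * k₁ * (k₂ + k₁)) - 1 := by
  have hu' : ubar ≠ 0 := ne_of_gt hu
  have hgu : γc * ubar = 1 / k₁ := by rw [hγc]; field_simp
  have hsub : k₁ ^ 2 - k₂ ^ 2 ≠ 0 := sub_ne_zero.mpr hkk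
  have hden : 1 - γc ^ 2 * ubar ^ 2 * k₂ ^ 2 = (k₁ ^ 2 - k₂ ^ 2) / k₁ ^ 2 := by
    have h : γc ^ 2 * ubar ^ 2 = (γc * ubar) ^ 2 := by ring
    rw [h, hgu]; field_simp
  have hρ : ρ₂ = -1 := by rw [hρ₂, hgu]; field_simp
  have ha : a₂ = -1 := by rw [ha₂, hgu]; field_simp
  have hk12 : k₁ + k₂ ≠ 0 := by
    intro h
    apply hsub
    have : k₂ = -k₁ := by linarith
    rw [this]; ring
  have hk21 : k₂ + k₁ ≠ 0 := by rw [add_comm]; exact hk12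
  have h1 : 1 - γc * ubar * k₂ = (k₁ - k₂) / k₁ := by rw [hgu]; field_simp
  have hψ : ψ₁ = k₁ / (2 * ubar * (k₁ + k₂)) := by
    rw [hψ₁, hden, h1]; field_simp; ring
  have hψ' : ψ₂ = k₁ / (2 * ubar * (k₁ + k₂)) := by
    rw [hψ₂, hden, h1]; field_simp; ring
  rw [hΛ, hν, hμ, hη, hψ, hψ', hρ, ha, hγc]
  field_simp
  ring
end
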